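/- arXiv:1508.00144 — 5 statements merged into one kernel-verified Lean document; each statement's English description precedes it below -/
import Mathlib

section
/- Let x: Ω → ℝ^N and y: Ω → ℝ be square-integrable, λ > 0, μ_x := E[x], Γ(0) := E[(x−μ_x)(x−μ_x)ᵀ], v := Cov(y,x), and let W_out := (Γ(0)+λI_N)^{-1} v, a_out := E[y] − W_outᵀ μ_x. Then the mean square error committed with the optimal readout satisfies E[(W_outᵀ x + a_out − y)²] = var(y) − vᵀ (Γ(0)+λI_N)^{-1} (Γ(0)+2λI_N) (Γ(0)+λI_N)^{-1} v. -/
/-!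
Centering turns the residual into `W ⬝ (x - μₓ) - (y - E y)`, whose mean square expands to
`W ⬝ Γ₀ W - 2 W ⬝ v + var y`. Since `(Γ₀ + λ) W = v`, the first two terms add up to
`-(W ⬝ Γ₀ W + 2λ W ⬝ W) = -W ⬝ (Γ₀ + 2λ) W`, and the symmetry of `(Γ₀ + λ)⁻¹` rewrites
`W ⬝ M W` as `v ⬝ (Γ₀ + λ)⁻¹ M (Γ₀ + λ)⁻¹ v`.
-/

open MeasureTheory Matrix
open scoped ENNReal

namespace Matrix

variable {n R : Type*} [Fintype n] [CommRing R]

lemma dotProduct_mul_mul_mulVec_of_isSymm {B : Matrix n n R} (hB : B.IsSymm) (M : Matrix n n R)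
    (v : n → R) : v ⬝ᵥ (B * M * B) *ᵥ v = (B *ᵥ v) ⬝ᵥ M *ᵥ (B *ᵥ v) := by
  rw [← mulVec_mulVec, ← mulVec_mulVec, dotProduct_mulVec, ← mulVec_transpose, hB.eq]

variable [DecidableEq n]

lemma dotProduct_mulVec_sub_two_mul_dotProduct_ridge {Γ : Matrix n n R} (hΓ : Γ.IsSymm)
    (lam : R) {v W : n → R} (hW : W = (Γ + lam • 1)⁻¹ *ᵥ v) :
    W ⬝ᵥ Γ *ᵥ W - 2 * (W ⬝ᵥ v)
      = -(v ⬝ᵥ ((Γ + lam • 1)⁻¹ * (Γ + (2 * lam) • 1) * (Γ + lam • 1)⁻¹) *ᵥ v) := by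
  set A := Γ + lam • (1 : Matrix n n R)
  -- if `A` is singular then `A⁻¹ = 0` by convention, so `W = 0`
  have hWv : W ⬝ᵥ v = W ⬝ᵥ Γ *ᵥ W + lam * (W ⬝ᵥ W) := by
    by_cases hdet : IsUnit A.det
    · have hAW : A *ᵥ W = v := by rw [hW, mulVec_mulVec, mul_nonsing_inv _ hdet, one_mulVec]
      rw [← hAW, add_mulVec, smul_mulVec, one_mulVec, dotProduct_add, dotProduct_smul,
        smul_eq_mul]
    · simp [hW, nonsing_inv_apply_not_isUnit _ hdet]
  have hA : A.IsSymm := hΓ.add (isSymm_one.smul lam)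
  rw [dotProduct_mul_mul_mulVec_of_isSymm hA.inv, ← hW, hWv, add_mulVec, smul_mulVec,
    one_mulVec, dotProduct_add, dotProduct_smul, smul_eq_mul]
  ring

end Matrix

section SecondMoments

variable {Ω ι : Type*} [MeasurableSpace Ω] {μ : Measure Ω} [Fintype ι] {X : Ω → ι → ℝ}

lemma memLp_dotProduct {p : ℝ≥0∞} (hX : ∀ i, MemLp (fun ω => X ω i) p μ) (w : ι → ℝ) :
    MemLp (fun ω => w ⬝ᵥ X ω) p μ :=
  memLp_finsetSum _ fun i _ => (hX i).const_mul (w i)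

lemma integral_mul_dotProduct {Z : Ω → ℝ} (h : ∀ i, Integrable (fun ω => Z ω * X ω i) μ)
    (w : ι → ℝ) : ∫ ω, Z ω * (w ⬝ᵥ X ω) ∂μ = w ⬝ᵥ fun i => ∫ ω, Z ω * X ω i ∂μ := by
  simp only [dotProduct, Finset.mul_sum, mul_left_comm (Z _)]
  rw [integral_finsetSum _ fun i _ => (h i).const_mul (w i)]
  simp only [integral_const_mul]

lemma integral_dotProduct_sub_sq {Z : Ω → ℝ} (hX : ∀ i, MemLp (fun ω => X ω i) 2 μ)
    (hZ : MemLp Z 2 μ) (w : ι → ℝ) :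
    ∫ ω, (w ⬝ᵥ X ω - Z ω) ^ 2 ∂μ
      = w ⬝ᵥ (of fun i j => ∫ ω, X ω i * X ω j ∂μ) *ᵥ w
        - 2 * (w ⬝ᵥ fun i => ∫ ω, Z ω * X ω i ∂μ) + ∫ ω, Z ω ^ 2 ∂μ := by
  set S := fun ω => w ⬝ᵥ X ω
  have hS : MemLp S 2 μ := memLp_dotProduct hX w
  have hSS : ∫ ω, S ω * S ω ∂μ = w ⬝ᵥ (of fun i j => ∫ ω, X ω i * X ω j ∂μ) *ᵥ w := by
    rw [integral_mul_dotProduct (fun i => hS.integrable_mul (hX i))]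
    congr with i
    simp_rw [mul_comm (S _)]
    rw [integral_mul_dotProduct (fun j => (hX i).integrable_mul (hX j)), dotProduct_comm]
    rfl
  have hSZ : ∫ ω, Z ω * S ω ∂μ = w ⬝ᵥ fun i => ∫ ω, Z ω * X ω i ∂μ :=
    integral_mul_dotProduct (fun i => hZ.integrable_mul (hX i)) w
  have iSS : Integrable (fun ω => S ω * S ω) μ := hS.integrable_mul hS
  have iSZ : Integrable (fun ω => 2 * (Z ω * S ω)) μ := (hZ.integrable_mul hS).const_mul 2
  calc ∫ ω, (S ω - Z ω) ^ 2 ∂μ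
      = ∫ ω, (S ω * S ω - 2 * (Z ω * S ω) + Z ω ^ 2) ∂μ := by congr with ω; ring
    _ = _ := by
      rw [integral_add (f := fun ω => S ω * S ω - 2 * (Z ω * S ω)) (iSS.sub iSZ)
        hZ.integrable_sq, integral_sub iSS iSZ, integral_const_mul, hSS, hSZ]

end SecondMoments

theorem optimal_readout_mse_formula_general
    {Ω : Type*} [MeasureSpace Ω] [IsProbabilityMeasure (volume : Measure Ω)]
    {N : ℕ} (x : Ω → Fin N → ℝ) (y : Ω → ℝ)
    (hx : ∀ i, MemLp (fun ω => x ω i) 2 volume) (hy : MemLp y 2 volume)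
    (lam : ℝ)
    (μx : Fin N → ℝ)
    (Γ₀ : Matrix (Fin N) (Fin N) ℝ)
    (hΓ₀ : ∀ i j, Γ₀ i j = ∫ ω, (x ω i - μx i) * (x ω j - μx j))
    (v : Fin N → ℝ) (hv : ∀ i, v i = ∫ ω, (y ω - ∫ ω', y ω') * (x ω i - μx i))
    (Wout : Fin N → ℝ) (hWout : Wout = (Γ₀ + lam • (1 : Matrix (Fin N) (Fin N) ℝ))⁻¹.mulVec v)
    (aout : ℝ) (haout : aout = (∫ ω, y ω) - ∑ i, Wout i * μx i) :
    ∫ ω, ((∑ i, Wout i * x ω i) + aout - y ω) ^ 2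
      = (∫ ω, (y ω - ∫ ω', y ω') ^ 2)
        - v ⬝ᵥ ((Γ₀ + lam • (1 : Matrix (Fin N) (Fin N) ℝ))⁻¹
            * (Γ₀ + (2 * lam) • (1 : Matrix (Fin N) (Fin N) ℝ))
            * (Γ₀ + lam • (1 : Matrix (Fin N) (Fin N) ℝ))⁻¹).mulVec v := by
  set Ey := ∫ ω', y ω'
  have hcentered :
      ∀ ω, (∑ i, Wout i * x ω i) + aout - y ω = Wout ⬝ᵥ (x ω - μx) - (y ω - Ey) := by
    intro ω
    simp only [haout, dotProduct, Pi.sub_apply, mul_sub, Finset.sum_sub_distrib]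
    ring
  have hΓ : Γ₀ = of fun i j => ∫ ω, (x ω - μx) i * (x ω - μx) j := ext hΓ₀
  have hv' : v = fun i => ∫ ω, (y ω - Ey) * (x ω - μx) i := funext hv
  have hsym : Γ₀.IsSymm := IsSymm.ext fun i j => by simp only [hΓ₀, mul_comm]
  simp_rw [hcentered]
  rw [integral_dotProduct_sub_sq (X := fun ω => x ω - μx) (Z := fun ω => y ω - Ey)
      (fun i => (hx i).sub (memLp_const (μx i))) (hy.sub (memLp_const Ey)),
    ← hΓ, ← hv', dotProduct_mulVec_sub_two_mul_dotProduct_ridge hsym lam hWout]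
  ring

/-- With `μₓ := E[x]`, `Γ₀ := E[(x−μₓ)(x−μₓ)ᵀ]`, `v := Cov(y,x)`,
`W_out := (Γ₀+λI)⁻¹ v` and `a_out := E[y] − W_outᵀ μₓ`, the optimal-readout mean
square error satisfies
`E[(W_outᵀ x + a_out − y)²] = var(y) − vᵀ (Γ₀+λI)⁻¹ (Γ₀+2λI) (Γ₀+λI)⁻¹ v`. -/
theorem optimal_readout_mse_formula
    {Ω : Type*} [MeasureSpace Ω] [IsProbabilityMeasure (volume : Measure Ω)]
    {N : ℕ} (x : Ω → Fin N → ℝ) (y : Ω → ℝ)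
    (hx : ∀ i, MemLp (fun ω => x ω i) 2 volume) (hy : MemLp y 2 volume)
    (lam : ℝ) (hlam : 0 < lam)
    (μx : Fin N → ℝ) (hμx : ∀ i, μx i = ∫ ω, x ω i)
    (Γ₀ : Matrix (Fin N) (Fin N) ℝ)
    (hΓ₀ : ∀ i j, Γ₀ i j = ∫ ω, (x ω i - μx i) * (x ω j - μx j))
    (v : Fin N → ℝ) (hv : ∀ i, v i = ∫ ω, (y ω - ∫ ω', y ω') * (x ω i - μx i))
    (Wout : Fin N → ℝ) (hWout : Wout = (Γ₀ + lam • (1 : Matrix (Fin N) (Fin N) ℝ))⁻¹.mulVec v)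
    (aout : ℝ) (haout : aout = (∫ ω, y ω) - ∑ i, Wout i * μx i) :
    ∫ ω, ((∑ i, Wout i * x ω i) + aout - y ω) ^ 2
      = (∫ ω, (y ω - ∫ ω', y ω') ^ 2)
        - v ⬝ᵥ ((Γ₀ + lam • (1 : Matrix (Fin N) (Fin N) ℝ))⁻¹
            * (Γ₀ + (2 * lam) • (1 : Matrix (Fin N) (Fin N) ℝ))
            * (Γ₀ + lam • (1 : Matrix (Fin N) (Fin N) ℝ))⁻¹).mulVec v :=
  optimal_readout_mse_formula_general x y hx hy lam μx Γ₀ hΓ₀ v hv Wout hWout aout haout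
end

section
/- Let x: Ω → ℝ^N and y: Ω → ℝ be square-integrable, λ > 0, Γ(0) := E[(x−E[x])(x−E[x])ᵀ], v := Cov(y,x). Then 0 ≤ vᵀ (Γ(0)+λI_N)^{-1} (Γ(0)+2λI_N) (Γ(0)+λI_N)^{-1} v ≤ var(y). In particular, if var(y) > 0 the capacity C := vᵀ (Γ(0)+λI_N)^{-1} (Γ(0)+2λI_N) (Γ(0)+λI_N)^{-1} v / var(y) satisfies 0 ≤ C ≤ 1. -/
open MeasureTheory Matrix

lemma aux_integrable_mul {Ω : Type*} [MeasureSpace Ω] [IsProbabilityMeasure (volume : Measure Ω)]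
    {f g : Ω → ℝ} (hf : MemLp f 2 volume) (hg : MemLp g 2 volume) :
    Integrable (fun ω => f ω * g ω) volume := by
  have h : MemLp (f • g) 1 volume := hg.smul hf
  rw [memLp_one_iff_integrable] at h
  exact h

/-- With `Γ₀ := E[(x−E[x])(x−E[x])ᵀ]` and `v := Cov(y,x)`, one has
`0 ≤ vᵀ (Γ₀+λI)⁻¹ (Γ₀+2λI) (Γ₀+λI)⁻¹ v ≤ var(y)`; in particular, when
`var(y) > 0` the capacity `C` of the reservoir satisfies `0 ≤ C ≤ 1`. -/
theorem capacity_between_zero_and_one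
    {Ω : Type*} [MeasureSpace Ω] [IsProbabilityMeasure (volume : Measure Ω)]
    {N : ℕ} (x : Ω → Fin N → ℝ) (y : Ω → ℝ)
    (hx : ∀ i, MemLp (fun ω => x ω i) 2 volume) (hy : MemLp y 2 volume)
    (lam : ℝ) (hlam : 0 < lam)
    (μx : Fin N → ℝ) (hμx : ∀ i, μx i = ∫ ω, x ω i)
    (Γ₀ : Matrix (Fin N) (Fin N) ℝ)
    (hΓ₀ : ∀ i j, Γ₀ i j = ∫ ω, (x ω i - μx i) * (x ω j - μx j))
    (v : Fin N → ℝ) (hv : ∀ i, v i = ∫ ω, (y ω - ∫ ω', y ω') * (x ω i - μx i)) :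
    (0 ≤ v ⬝ᵥ ((Γ₀ + lam • (1 : Matrix (Fin N) (Fin N) ℝ))⁻¹
          * (Γ₀ + (2 * lam) • (1 : Matrix (Fin N) (Fin N) ℝ))
          * (Γ₀ + lam • (1 : Matrix (Fin N) (Fin N) ℝ))⁻¹).mulVec v
      ∧ v ⬝ᵥ ((Γ₀ + lam • (1 : Matrix (Fin N) (Fin N) ℝ))⁻¹
          * (Γ₀ + (2 * lam) • (1 : Matrix (Fin N) (Fin N) ℝ))
          * (Γ₀ + lam • (1 : Matrix (Fin N) (Fin N) ℝ))⁻¹).mulVec v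
        ≤ ∫ ω, (y ω - ∫ ω', y ω') ^ 2)
    ∧ ((0 < ∫ ω, (y ω - ∫ ω', y ω') ^ 2) →
        0 ≤ (v ⬝ᵥ ((Γ₀ + lam • (1 : Matrix (Fin N) (Fin N) ℝ))⁻¹
              * (Γ₀ + (2 * lam) • (1 : Matrix (Fin N) (Fin N) ℝ))
              * (Γ₀ + lam • (1 : Matrix (Fin N) (Fin N) ℝ))⁻¹).mulVec v)
            / (∫ ω, (y ω - ∫ ω', y ω') ^ 2)
          ∧ (v ⬝ᵥ ((Γ₀ + lam • (1 : Matrix (Fin N) (Fin N) ℝ))⁻¹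
              * (Γ₀ + (2 * lam) • (1 : Matrix (Fin N) (Fin N) ℝ))
              * (Γ₀ + lam • (1 : Matrix (Fin N) (Fin N) ℝ))⁻¹).mulVec v)
            / (∫ ω, (y ω - ∫ ω', y ω') ^ 2) ≤ 1) := by
  classical
  set f : Ω → ℝ := fun ω => y ω - ∫ ω', y ω' with hf_def
  set c : Fin N → Ω → ℝ := fun i ω => x ω i - μx i with hc_def
  have hf2 : MemLp f 2 volume := hy.sub (memLp_const _)
  have hc2 : ∀ i, MemLp (c i) 2 volume := fun i => (hx i).sub (memLp_const _)
  have int_ff : Integrable (fun ω => f ω * f ω) volume := aux_integrable_mul hf2 hf2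
  have int_fc : ∀ i, Integrable (fun ω => f ω * c i ω) volume :=
    fun i => aux_integrable_mul hf2 (hc2 i)
  have int_cc : ∀ i j, Integrable (fun ω => c i ω * c j ω) volume :=
    fun i j => aux_integrable_mul (hc2 i) (hc2 j)
  -- the linear combination
  set g : (Fin N → ℝ) → Ω → ℝ := fun u ω => ∑ i, u i * c i ω with hg_def
  have hg2 : ∀ u, MemLp (g u) 2 volume := by
    intro u
    exact memLp_finset_sum Finset.univ (fun i _ => (hc2 i).const_mul (u i))
  have int_fg : ∀ u, Integrable (fun ω => f ω * g u ω) volume :=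
    fun u => aux_integrable_mul hf2 (hg2 u)
  have int_gg : ∀ u, Integrable (fun ω => g u ω * g u ω) volume :=
    fun u => aux_integrable_mul (hg2 u) (hg2 u)
  -- first moment identity
  have I1 : ∀ u, (∫ ω, f ω * g u ω) = u ⬝ᵥ v := by
    intro u
    have : (fun ω => f ω * g u ω) = fun ω => ∑ i, u i * (f ω * c i ω) := by
      funext ω
      rw [hg_def, Finset.mul_sum]
      exact Finset.sum_congr rfl fun i _ => by ring
    rw [this, integral_finset_sum _ (fun i _ => ((int_fc i).const_mul (u i)))]
    simp only [integral_const_mul, dotProduct]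
    exact Finset.sum_congr rfl fun i _ => by rw [hv i]
  -- second moment identity
  have I2 : ∀ u, (∫ ω, g u ω * g u ω) = u ⬝ᵥ Γ₀.mulVec u := by
    intro u
    have : (fun ω => g u ω * g u ω)
        = fun ω => ∑ i, ∑ j, u i * u j * (c i ω * c j ω) := by
      funext ω
      rw [hg_def, Finset.sum_mul_sum]
      exact Finset.sum_congr rfl fun i _ => Finset.sum_congr rfl fun j _ => by ring
    rw [this, integral_finset_sum _ (fun i _ =>
      integrable_finset_sum _ (fun j _ => (int_cc i j).const_mul _))]
    have : ∀ i, (∫ ω, ∑ j, u i * u j * (c i ω * c j ω))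
        = ∑ j, u i * u j * Γ₀ i j := by
      intro i
      rw [integral_finset_sum _ (fun j _ => (int_cc i j).const_mul _)]
      exact Finset.sum_congr rfl fun j _ => by rw [integral_const_mul, hΓ₀ i j]
    rw [Finset.sum_congr rfl fun i _ => this i]
    simp only [dotProduct, Matrix.mulVec, Finset.mul_sum]
    exact Finset.sum_congr rfl fun i _ => Finset.sum_congr rfl fun j _ => by ring
  have hΓpsd : ∀ u, 0 ≤ u ⬝ᵥ Γ₀.mulVec u := by
    intro u
    rw [← I2 u]
    exact integral_nonneg fun ω => mul_self_nonneg _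
  -- Cauchy–Schwarz
  have hCS : ∀ u, (u ⬝ᵥ v) ^ 2 ≤ (u ⬝ᵥ Γ₀.mulVec u) * (∫ ω, f ω * f ω) := by
    intro u
    have key : ∀ t : ℝ, 0 ≤ (∫ ω, g u ω * g u ω) * (t * t)
        + (-(2 * ∫ ω, f ω * g u ω)) * t + (∫ ω, f ω * f ω) := by
      intro t
      have expand : (∫ ω, (t * g u ω - f ω) ^ 2)
          = (∫ ω, g u ω * g u ω) * (t * t)
            + (-(2 * ∫ ω, f ω * g u ω)) * t + (∫ ω, f ω * f ω) := by
        have : (fun ω => (t * g u ω - f ω) ^ 2)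
            = fun ω => (t * t) * (g u ω * g u ω) - (2 * t) * (f ω * g u ω)
                + f ω * f ω := by
          funext ω; ring
        have h1 : Integrable (fun ω => (t * t) * (g u ω * g u ω)
            - (2 * t) * (f ω * g u ω)) volume :=
          ((int_gg u).const_mul _).sub ((int_fg u).const_mul _)
        rw [this, integral_add h1 int_ff,
          integral_sub ((int_gg u).const_mul _) ((int_fg u).const_mul _),
          integral_const_mul, integral_const_mul]
        ring
      rw [← expand]
      exact integral_nonneg fun ω => sq_nonneg _
    have hd := discrim_le_zero key
    rw [discrim] at hd
    rw [← I1 u, ← I2 u]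
    nlinarith [hd]
  -- matrices
  set A : Matrix (Fin N) (Fin N) ℝ := Γ₀ + lam • 1 with hA_def
  set B : Matrix (Fin N) (Fin N) ℝ := Γ₀ + (2 * lam) • 1 with hB_def
  have hΓsym : Γ₀ᵀ = Γ₀ := by
    ext i j
    rw [transpose_apply, hΓ₀, hΓ₀]
    simp_rw [mul_comm]
  have hAsym : Aᵀ = A := by rw [hA_def, transpose_add, transpose_smul, transpose_one, hΓsym]
  have hBsym : Bᵀ = B := by rw [hB_def, transpose_add, transpose_smul, transpose_one, hΓsym]
  have hquadA : ∀ u, u ⬝ᵥ A.mulVec u = u ⬝ᵥ Γ₀.mulVec u + lam * (u ⬝ᵥ u) := by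
    intro u
    rw [hA_def, add_mulVec, smul_mulVec, one_mulVec, dotProduct_add, dotProduct_smul,
      smul_eq_mul]
  have hApos : A.PosDef := by
    refine posDef_iff_dotProduct_mulVec.mpr ⟨?_, ?_⟩
    · show Aᴴ = A
      rw [show Aᴴ = Aᵀ from Matrix.ext fun i j => star_trivial _, hAsym]
    · intro u hu
      have hsu : star u = u := funext fun i => star_trivial _
      rw [hsu, hquadA]
      have h1 : 0 < u ⬝ᵥ u :=
        lt_of_le_of_ne (Finset.sum_nonneg fun i _ => mul_self_nonneg _)
          (fun h => hu (dotProduct_self_eq_zero.mp h.symm))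
      nlinarith [hΓpsd u, mul_pos hlam h1]
  have hdet : IsUnit A.det := hApos.det_pos.ne'.isUnit
  have hAA : A * A⁻¹ = 1 := Matrix.mul_nonsing_inv A hdet
  set w : Fin N → ℝ := A⁻¹.mulVec v with hw_def
  have hAw : A.mulVec w = v := by
    rw [hw_def, mulVec_mulVec, hAA, one_mulVec]
  have hAinvsym : A⁻¹ᵀ = A⁻¹ := by rw [transpose_nonsing_inv, hAsym]
  set a : ℝ := w ⬝ᵥ Γ₀.mulVec w with ha_def
  set b : ℝ := w ⬝ᵥ w with hb_def
  set V : ℝ := ∫ ω, f ω * f ω with hV_def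
  have hQ : v ⬝ᵥ (A⁻¹ * B * A⁻¹).mulVec v = a + 2 * lam * b := by
    have e1 : (A⁻¹ * B * A⁻¹).mulVec v = A⁻¹.mulVec (B.mulVec w) := by
      rw [hw_def, ← mulVec_mulVec, ← mulVec_mulVec]
    rw [e1, dotProduct_mulVec, ← hAinvsym, vecMul_transpose, ← hw_def, hB_def,
      add_mulVec, smul_mulVec, one_mulVec, dotProduct_add, dotProduct_smul,
      smul_eq_mul, ← ha_def, ← hb_def]
  have hwv : w ⬝ᵥ v = a + lam * b := by rw [← hAw, hquadA]
  have ha : 0 ≤ a := hΓpsd w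
  have hb : 0 ≤ b := Finset.sum_nonneg fun i _ => mul_self_nonneg _
  have hVpos : 0 ≤ V := integral_nonneg fun ω => mul_self_nonneg _
  have hCSw : (a + lam * b) ^ 2 ≤ a * V := by
    have := hCS w
    rwa [hwv] at this
  have key1 : 0 ≤ a + 2 * lam * b := by nlinarith
  have key2 : a + 2 * lam * b ≤ V := by
    rcases eq_or_lt_of_le ha with h | h
    · rw [← h] at hCSw ⊢
      have h0 : (lam * b) ^ 2 ≤ 0 := by nlinarith [hCSw]
      have hlb : lam * b = 0 := by nlinarith [sq_nonneg (lam * b)]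
      have hb0 : b = 0 := by
        rcases mul_eq_zero.mp hlb with h' | h'
        · exact absurd h' (ne_of_gt hlam)
        · exact h'
      rw [hb0]; linarith
    · nlinarith [sq_nonneg (lam * b)]
  have hVsq : (∫ ω, (y ω - ∫ ω', y ω') ^ 2) = V :=
    integral_congr_ae (Filter.Eventually.of_forall fun ω => by simp only [hf_def]; ring)
  rw [hVsq, hQ]
  refine ⟨⟨key1, key2⟩, fun hpos => ⟨div_nonneg key1 hpos.le, (div_le_one hpos).mpr key2⟩⟩
end

section
/- (Separation property of the reservoir model.) Let A ∈ M_N(ℝ) be an invertible matrix (equivalently, a matrix having no zero eigenvalues), let g: ℝ → ℝ^N be injective, and let x_0 ∈ ℝ^N. Let z, z': ℤ → ℝ be two input signals that coincide at every time except at some s ∈ ℤ, i.e. z(t) = z'(t) for all t ≠ s and z(s) ≠ z'(s). Suppose x, x': ℤ → ℝ^N satisfy the recursions x(t) = x_0 + A(x(t−1) − x_0) + g(z(t)) and x'(t) = x_0 + A(x'(t−1) − x_0) + g(z'(t)) for all t ∈ ℤ, and that x(t) = x'(t) for all t < s. Then x(t) ≠ x'(t) for every t ≥ s. -/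
/-!
At time `s` both trajectories start from the same state but receive different inputs, so they
split because `g` is injective. From then on the inputs agree, and one step of the recursion is
injective in the state because `A` is invertible, so the split can never close again.
-/

open Function

section Separation

variable {X U : Type*} (Φ : X → U → X) {x x' : ℤ → X} {z z' : ℤ → U} {s : ℤ}

theorem separation_of_injective_step (hstate : ∀ w, Injective fun y => Φ y w)
    (hinput : ∀ y, Injective (Φ y))
    (hx : ∀ t, x t = Φ (x (t - 1)) (z t)) (hx' : ∀ t, x' t = Φ (x' (t - 1)) (z' t))
    (hzz' : ∀ t, t ≠ s → z t = z' t) (hs : z s ≠ z' s) (hprev : x (s - 1) = x' (s - 1)) :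
    ∀ t, s ≤ t → x t ≠ x' t := by
  intro t ht
  induction t, ht using Int.leInduction with
  | base =>
    rw [hx, hx', hprev]
    exact (hinput _).ne hs
  | succ n hn hne =>
    rw [hx, hx', add_sub_cancel_right, hzz' _ (by omega)]
    exact (hstate _).ne hne

end Separation

section ReservoirStep

variable {M V : Type*} [AddCommGroup M]

def reservoirStep (f : M → M) (x₀ : M) (g : V → M) (y : M) (w : V) : M :=
  x₀ + f (y - x₀) + g w

theorem reservoirStep_injective_state {f : M → M} (hf : Injective f) (x₀ : M) (g : V → M)
    (w : V) : Injective fun y => reservoirStep f x₀ g y w :=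
  (add_left_injective _).comp <| (add_right_injective x₀).comp <| hf.comp sub_left_injective

theorem reservoirStep_injective_input (f : M → M) (x₀ : M) {g : V → M} (hg : Injective g)
    (y : M) : Injective (reservoirStep f x₀ g y) :=
  (add_right_injective _).comp hg

end ReservoirStep

/-- **separation property of the reservoir model.** If `A` is an
invertible matrix, `g : ℝ → ℝᴺ` is injective, and the inputs `z`, `z'` coincide
everywhere except at time `s`, then the corresponding reservoir trajectories
`x(t) = x₀ + A(x(t−1) − x₀) + g(z(t))` and
`x'(t) = x₀ + A(x'(t−1) − x₀) + g(z'(t))`, which agree before time `s`, satisfy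
`x(t) ≠ x'(t)` for every `t ≥ s`. -/
theorem reservoir_model_separation_property
    {N : ℕ} (A : Matrix (Fin N) (Fin N) ℝ) (hA : IsUnit A)
    (g : ℝ → Fin N → ℝ) (hg : Function.Injective g)
    (x₀ : Fin N → ℝ) (z z' : ℤ → ℝ) (s : ℤ)
    (hzz' : ∀ t : ℤ, t ≠ s → z t = z' t) (hs : z s ≠ z' s)
    (x x' : ℤ → Fin N → ℝ)
    (hx : ∀ t : ℤ, x t = x₀ + A.mulVec (x (t - 1) - x₀) + g (z t))
    (hx' : ∀ t : ℤ, x' t = x₀ + A.mulVec (x' (t - 1) - x₀) + g (z' t))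
    (hpast : ∀ t : ℤ, t < s → x t = x' t) :
    ∀ t : ℤ, s ≤ t → x t ≠ x' t :=
  separation_of_injective_step (reservoirStep A.mulVec x₀ g)
    (reservoirStep_injective_state (Matrix.mulVec_injective_iff_isUnit.mpr hA) x₀ g)
    (reservoirStep_injective_input A.mulVec x₀ hg) hx hx' hzz' hs (hpast _ (by omega))
end

section
/- (Uniform fading memory property of the reservoir model.) Let ‖·‖ be a norm on ℝ^N and denote also by ‖·‖ the induced operator norm on M_N(ℝ). Let A ∈ M_N(ℝ) with ‖A‖ < 1, let g: ℝ → ℝ^N be continuous, and let k > 0. For any input signal z: ℤ → ℝ with |z(t)| ≤ k for all t, the series x_z(t) := Σ_{i=0}^∞ A^i g(z(t−i)) converges for every t ∈ ℤ. Moreover, for every ε > 0 there exist δ_ε > 0 and h_ε ∈ ℕ, independent of t, such that for any t ∈ ℤ and any two input signals z, z': ℤ → ℝ bounded by k, if |z(s) − z'(s)| < δ_ε for all s ∈ [t−h_ε, t], then ‖x_z(t) − x_{z'}(t)‖ < ε. -/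
/-!
A norm on a finite-dimensional space is continuous and bounded below by a positive multiple of
the sup norm, so `nv` can be traded for the sup norm whenever completeness or compactness is
needed. Each term `Aⁱ g(z(t - i))` has `nv`-size at most `cⁱ M`, where `M` bounds `nv ∘ g` on
`[-k, k]`, which gives absolute convergence. For fading memory, split the difference of two
outputs after `h + 1` terms: the tail is at most `c^(h+1) · 2M / (1 - c)` whatever the inputs,
which fixes `h`, and the head is controlled by the uniform continuity of `g` on `[-k, k]`, which
fixes `δ`.
-/

namespace Seminorm

section

variable {𝕜 E : Type*} [SeminormedRing 𝕜] [AddCommGroup E] [Module 𝕜 E] (p : Seminorm 𝕜 E)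

theorem map_pow_apply_le {T : Module.End 𝕜 E} {c : ℝ} (hc : 0 ≤ c)
    (hT : ∀ v, p (T v) ≤ c * p v) (i : ℕ) (v : E) : p ((T ^ i) v) ≤ c ^ i * p v := by
  induction i with
  | zero => simp
  | succ i ih =>
    calc p ((T ^ (i + 1)) v) = p (T ((T ^ i) v)) := by rw [pow_succ', Module.End.mul_apply]
      _ ≤ c * (c ^ i * p v) := (hT _).trans (mul_le_mul_of_nonneg_left ih hc)
      _ = c ^ (i + 1) * p v := by ring

theorem map_tsum_le_of_le [TopologicalSpace E] (hpc : Continuous p) {ι : Type*} {a : ι → E}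
    {b : ι → ℝ} (ha : Summable a) (hb : Summable b) (hab : ∀ i, p (a i) ≤ b i) :
    p (∑' i, a i) ≤ ∑' i, b i :=
  le_of_tendsto' ((hpc.tendsto _).comp ha.hasSum) fun s =>
    calc p (∑ i ∈ s, a i) ≤ ∑ i ∈ s, p (a i) :=
          s.le_sum_of_subadditive p (map_zero p).le (map_add_le_add p) a
      _ ≤ ∑ i ∈ s, b i := Finset.sum_le_sum fun i _ => hab i
      _ ≤ ∑' i, b i := hb.sum_le_tsum s fun i _ => (apply_nonneg p _).trans (hab i)

end

section

variable {E : Type*} [NormedAddCommGroup E] [NormedSpace ℝ E] (p : Seminorm ℝ E)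

theorem summable_of_le [CompleteSpace E] {m : ℝ} (hm : 0 < m) (hpm : ∀ v, m * ‖v‖ ≤ p v)
    {ι : Type*} {a : ι → E} {b : ι → ℝ} (hb : Summable b) (hab : ∀ i, p (a i) ≤ b i) :
    Summable a :=
  (hb.div_const m).of_norm_bounded fun i =>
    (le_div_iff₀' hm).mpr ((hpm (a i)).trans (hab i))

theorem exists_forall_map_sub_lt {X : Type*} [PseudoMetricSpace X] (hpc : Continuous p)
    {f : X → E} {s : Set X} (hf : UniformContinuousOn f s) {η : ℝ} (hη : 0 < η) :
    ∃ δ > 0, ∀ x ∈ s, ∀ y ∈ s, dist x y < δ → p (f x - f y) < η := by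
  obtain ⟨r, hr, hball⟩ := Metric.continuousAt_iff.mp (hpc.continuousAt (x := 0)) η hη
  obtain ⟨δ, hδ, hfδ⟩ := Metric.uniformContinuousOn_iff.mp hf r hr
  refine ⟨δ, hδ, fun x hx y hy hxy => ?_⟩
  have := hball (x := f x - f y) (by simpa [dist_eq_norm] using hfδ x hx y hy hxy)
  exact (le_abs_self _).trans_lt (by simpa [Real.dist_eq] using this)

variable [FiniteDimensional ℝ E]

theorem continuous_of_finiteDimensional : Continuous p :=
  continuousOn_univ.mp (p.convexOn.continuousOn isOpen_univ)

theorem exists_pos_mul_norm_le (hp : ∀ v, p v = 0 → v = 0) :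
    ∃ m > 0, ∀ v, m * ‖v‖ ≤ p v := by
  obtain ⟨m, hm, hmp⟩ := (isCompact_sphere (0 : E) 1).exists_forall_le'
    p.continuous_of_finiteDimensional.continuousOn (a := 0) fun v hv =>
      (apply_nonneg p v).lt_of_ne' fun h => by simp [hp v h] at hv
  refine ⟨m, hm, fun v => ?_⟩
  rcases eq_or_ne v 0 with rfl | hv
  · simp
  · have := hmp (‖v‖⁻¹ • v) (by simpa using norm_smul_inv_norm (𝕜 := ℝ) hv)
    rwa [map_smul_eq_mul, norm_inv, norm_norm, le_inv_mul_iff₀ (norm_pos_iff.mpr hv),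
      mul_comm] at this

end

end Seminorm

section

variable {c B : ℝ} {e : ℕ → ℝ}

theorem summable_pow_mul_of_le (hc0 : 0 ≤ c) (hc1 : c < 1) (he0 : ∀ i, 0 ≤ e i)
    (heB : ∀ i, e i ≤ B) : Summable fun i => c ^ i * e i :=
  ((summable_geometric_of_lt_one hc0 hc1).mul_right B).of_nonneg_of_le
    (fun i => mul_nonneg (pow_nonneg hc0 i) (he0 i))
    fun i => mul_le_mul_of_nonneg_left (heB i) (pow_nonneg hc0 i)

theorem tsum_pow_mul_le (hc0 : 0 ≤ c) (hc1 : c < 1) (he0 : ∀ i, 0 ≤ e i)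
    (heB : ∀ i, e i ≤ B) {η : ℝ} {n : ℕ} (heη : ∀ i ≤ n, e i ≤ η) :
    ∑' i, c ^ i * e i ≤ (η + c ^ (n + 1) * B) / (1 - c) := by
  have hgeom := summable_geometric_of_lt_one hc0 hc1
  have hs := summable_pow_mul_of_le hc0 hc1 he0 heB
  have hhead : ∑ i ∈ Finset.range (n + 1), c ^ i * e i ≤ η * (1 - c)⁻¹ :=
    calc ∑ i ∈ Finset.range (n + 1), c ^ i * e i ≤ ∑ i ∈ Finset.range (n + 1), η * c ^ i :=
          Finset.sum_le_sum fun i hi => by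
            rw [mul_comm]
            exact mul_le_mul_of_nonneg_right (heη i (Finset.mem_range_succ_iff.mp hi))
              (pow_nonneg hc0 i)
      _ ≤ ∑' i, η * c ^ i := (hgeom.mul_left η).sum_le_tsum _ fun i _ =>
          mul_nonneg ((he0 0).trans (heη 0 n.zero_le)) (pow_nonneg hc0 i)
      _ = η * (1 - c)⁻¹ := by rw [hgeom.tsum_mul_left, tsum_geometric_of_lt_one hc0 hc1]
  have htail : ∑' i, c ^ (i + (n + 1)) * e (i + (n + 1)) ≤ c ^ (n + 1) * B * (1 - c)⁻¹ :=
    calc ∑' i, c ^ (i + (n + 1)) * e (i + (n + 1)) ≤ ∑' i, c ^ (n + 1) * B * c ^ i :=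
          Summable.tsum_le_tsum (fun i =>
              (mul_le_mul_of_nonneg_left (heB _) (pow_nonneg hc0 _)).trans_eq (by ring))
            ((summable_nat_add_iff (n + 1)).mpr hs) (hgeom.mul_left _)
      _ = c ^ (n + 1) * B * (1 - c)⁻¹ := by
          rw [hgeom.tsum_mul_left, tsum_geometric_of_lt_one hc0 hc1]
  rw [← hs.sum_add_tsum_nat_add (n + 1), div_eq_mul_inv, add_mul]
  exact add_le_add hhead htail

end

section

variable {E : Type*} [NormedAddCommGroup E] [NormedSpace ℝ E] [FiniteDimensional ℝ E]
  {p : Seminorm ℝ E} (hp : ∀ v, p v = 0 → v = 0) {T : Module.End ℝ E} {c : ℝ}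
  (hc0 : 0 ≤ c) (hc1 : c < 1) (hT : ∀ v, p (T v) ≤ c * p v)
include hp hc0 hc1 hT

theorem Seminorm.summable_pow_apply_of_le {u : ℕ → E} {M : ℝ} (hu : ∀ i, p (u i) ≤ M) :
    Summable fun i => (T ^ i) (u i) :=
  have ⟨_, hm, hpm⟩ := p.exists_pos_mul_norm_le hp
  p.summable_of_le hm hpm ((summable_geometric_of_lt_one hc0 hc1).mul_right M) fun i =>
    (p.map_pow_apply_le hc0 hT i _).trans
      (mul_le_mul_of_nonneg_left (hu i) (pow_nonneg hc0 i))

theorem Seminorm.map_tsum_pow_apply_sub_tsum_le {u u' : ℕ → E} {M η : ℝ} {n : ℕ}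
    (hu : ∀ i, p (u i) ≤ M) (hu' : ∀ i, p (u' i) ≤ M) (hη : ∀ i ≤ n, p (u i - u' i) ≤ η) :
    p (∑' i, (T ^ i) (u i) - ∑' i, (T ^ i) (u' i)) ≤
      (η + c ^ (n + 1) * (2 * M)) / (1 - c) := by
  have hdiff (i : ℕ) : p (u i - u' i) ≤ 2 * M :=
    (map_sub_le_add p _ _).trans (by linarith [hu i, hu' i])
  have hsum {v : ℕ → E} {B : ℝ} (hv : ∀ i, p (v i) ≤ B) : Summable fun i => (T ^ i) (v i) :=
    Seminorm.summable_pow_apply_of_le hp hc0 hc1 hT hv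
  rw [← (hsum hu).tsum_sub (hsum hu')]
  simp_rw [← map_sub]
  exact (p.map_tsum_le_of_le p.continuous_of_finiteDimensional (hsum hdiff)
    (summable_pow_mul_of_le hc0 hc1 (fun i => apply_nonneg p _) hdiff)
    fun i => p.map_pow_apply_le hc0 hT i _).trans
      (tsum_pow_mul_le hc0 hc1 (fun i => apply_nonneg p _) hdiff hη)

end

theorem reservoir_model_uniform_fading_memory_general
    {N : ℕ} (nv : (Fin N → ℝ) → ℝ)
    (nv_def : ∀ v : Fin N → ℝ, nv v = 0 ↔ v = 0)
    (nv_smul : ∀ (a : ℝ) (v : Fin N → ℝ), nv (a • v) = |a| * nv v)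
    (nv_add : ∀ v w : Fin N → ℝ, nv (v + w) ≤ nv v + nv w)
    (A : Matrix (Fin N) (Fin N) ℝ) (c : ℝ) (hc0 : 0 ≤ c) (hc1 : c < 1)
    (hAop : ∀ v : Fin N → ℝ, nv (A.mulVec v) ≤ c * nv v)
    (g : ℝ → Fin N → ℝ) (hg : Continuous g) (k : ℝ) :
    (∀ z : ℤ → ℝ, (∀ t : ℤ, |z t| ≤ k) → ∀ t : ℤ,
        Summable (fun i : ℕ => (A ^ i).mulVec (g (z (t - i))))) ∧
    (∀ ε : ℝ, 0 < ε → ∃ δ : ℝ, 0 < δ ∧ ∃ h : ℕ,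
      ∀ (t : ℤ) (z z' : ℤ → ℝ), (∀ u : ℤ, |z u| ≤ k) → (∀ u : ℤ, |z' u| ≤ k) →
        (∀ s : ℤ, t - h ≤ s → s ≤ t → |z s - z' s| < δ) →
        nv ((∑' i : ℕ, (A ^ i).mulVec (g (z (t - i))))
            - ∑' i : ℕ, (A ^ i).mulVec (g (z' (t - i)))) < ε) := by
  -- `nv_smul` fits `Seminorm.of` because `‖a‖` unfolds to `|a|` on `ℝ`.
  let p : Seminorm ℝ (Fin N → ℝ) := Seminorm.of nv nv_add nv_smul
  have hp : ∀ v, p v = 0 → v = 0 := fun v => (nv_def v).mp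
  have hT : ∀ v, p (Matrix.toLin' A v) ≤ c * p v := hAop
  have hpow (i : ℕ) (v : Fin N → ℝ) : (A ^ i).mulVec v = (Matrix.toLin' A ^ i) v := by
    rw [← Matrix.toLin'_pow, Matrix.toLin'_apply]
  simp only [hpow]
  have hIcc {x : ℝ} (hx : |x| ≤ k) : x ∈ Set.Icc (-k) k := abs_le.mp hx
  obtain ⟨M, hM⟩ := isCompact_Icc.exists_bound_of_continuousOn
    (p.continuous_of_finiteDimensional.comp hg).continuousOn
  have hgM {x : ℝ} (hx : |x| ≤ k) : p (g x) ≤ M := (le_abs_self _).trans (hM x (hIcc hx))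
  refine ⟨fun z hz t => p.summable_pow_apply_of_le hp hc0 hc1 hT fun i => hgM (hz _),
    fun ε hε => ?_⟩
  have hη : 0 < ε * (1 - c) / 2 := by have := sub_pos.mpr hc1; positivity
  obtain ⟨n, hn⟩ : ∃ n : ℕ, c ^ (n + 1) * (2 * M) < ε * (1 - c) / 2 :=
    (((tendsto_pow_atTop_nhds_zero_of_lt_one hc0 hc1).comp (Filter.tendsto_add_atTop_nat 1))
      |>.mul_const (2 * M) |>.eventually_lt_const (by simpa using hη)).exists
  obtain ⟨δ, hδ, hgδ⟩ := p.exists_forall_map_sub_lt p.continuous_of_finiteDimensional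
    (isCompact_Icc.uniformContinuousOn_of_continuous hg.continuousOn) hη
  refine ⟨δ, hδ, n, fun t z z' hz hz' hzz' => ?_⟩
  have hclose (i : ℕ) (hi : i ≤ n) : p (g (z (t - i)) - g (z' (t - i))) ≤ ε * (1 - c) / 2 :=
    (hgδ _ (hIcc (hz _)) _ (hIcc (hz' _)) (hzz' (t - i) (by omega) (by omega))).le
  calc p _ ≤ (ε * (1 - c) / 2 + c ^ (n + 1) * (2 * M)) / (1 - c) :=
        p.map_tsum_pow_apply_sub_tsum_le hp hc0 hc1 hT (fun i => hgM (hz _))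
          (fun i => hgM (hz' _)) hclose
    _ < ε := by rw [div_lt_iff₀ (by linarith)]; linarith

/-- **uniform fading memory property of the reservoir model.**
Let `nv` be a norm on `ℝᴺ` and suppose the induced operator norm of `A` is `< 1`
(encoded by a constant `0 ≤ c < 1` with `nv (A v) ≤ c * nv v` for all `v`).  Let
`g : ℝ → ℝᴺ` be continuous and `k > 0`.  Then for every input `z` bounded by `k`
the series `x_z(t) := Σ_{i=0}^∞ Aⁱ g(z(t−i))` converges, and for every `ε > 0`
there are `δ_ε > 0` and `h_ε ∈ ℕ`, independent of `t`, such that whenever two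
inputs bounded by `k` satisfy `|z(s) − z'(s)| < δ_ε` for all `s ∈ [t−h_ε, t]`,
the corresponding outputs satisfy `nv (x_z(t) − x_{z'}(t)) < ε`. -/
theorem reservoir_model_uniform_fading_memory
    {N : ℕ} (nv : (Fin N → ℝ) → ℝ)
    (nv_def : ∀ v : Fin N → ℝ, nv v = 0 ↔ v = 0)
    (nv_smul : ∀ (a : ℝ) (v : Fin N → ℝ), nv (a • v) = |a| * nv v)
    (nv_add : ∀ v w : Fin N → ℝ, nv (v + w) ≤ nv v + nv w)
    (A : Matrix (Fin N) (Fin N) ℝ) (c : ℝ) (hc0 : 0 ≤ c) (hc1 : c < 1)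
    (hAop : ∀ v : Fin N → ℝ, nv (A.mulVec v) ≤ c * nv v)
    (g : ℝ → Fin N → ℝ) (hg : Continuous g) (k : ℝ) (hk : 0 < k) :
    (∀ z : ℤ → ℝ, (∀ t : ℤ, |z t| ≤ k) → ∀ t : ℤ,
        Summable (fun i : ℕ => (A ^ i).mulVec (g (z (t - i))))) ∧
    (∀ ε : ℝ, 0 < ε → ∃ δ : ℝ, 0 < δ ∧ ∃ h : ℕ,
      ∀ (t : ℤ) (z z' : ℤ → ℝ), (∀ u : ℤ, |z u| ≤ k) → (∀ u : ℤ, |z' u| ≤ k) →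
        (∀ s : ℤ, t - h ≤ s → s ≤ t → |z s - z' s| < δ) →
        nv ((∑' i : ℕ, (A ^ i).mulVec (g (z (t - i))))
            - ∑' i : ℕ, (A ^ i).mulVec (g (z' (t - i)))) < ε) :=
  reservoir_model_uniform_fading_memory_general nv nv_def nv_smul nv_add A c hc0 hc1 hAop g hg k
end

section
/- Let ξ > 0, N ∈ ℕ with N ≥ 1, and a ∈ ℝ with |a| < 1. Define the matrix A ∈ M_N(ℝ) by A_{i,m} := (1 − e^{−ξ}) e^{−(i−m)ξ} a for 1 ≤ m ≤ i, A_{i,m} := 0 for i < m < N, together with an additional term e^{−iξ} in the last column, i.e. A_{i,N} := e^{−iξ} + (1 − e^{−ξ}) e^{−(i−N)ξ} a · 1_{{N ≤ i}}. Then the row-sum matrix norm satisfies ‖A‖_∞ := max_{1≤i≤N} Σ_{m=1}^N |A_{i,m}| < 1. -/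
/-!
With `r = e^{-ξ}`, row `i` has absolute sum at most
`|a| (1 - r) ∑_{j ≤ i} r^j + r^{i+1} = |a| (1 - r^{i+1}) + r^{i+1}`,
a convex combination of `|a| < 1` and `1` that puts weight `1 - r^{i+1} > 0` on `|a|`.
-/

open Finset

theorem Fin.sum_ite_val_le_eq_sum_range {M : Type*} [AddCommMonoid M] {N : ℕ} (i : Fin N)
    (f : ℕ → M) :
    ∑ m : Fin N, (if m.val ≤ i.val then f (i.val - m.val) else 0) =
      ∑ j ∈ range (i.val + 1), f j := by
  rw [Fin.sum_univ_eq_sum_range (fun m => if m ≤ i.val then f (i.val - m) else 0), ← sum_filter,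
    ← sum_range_reflect]
  have hfilter : (range N).filter (· ≤ i.val) = range (i.val + 1) := by
    ext m; simp only [mem_filter, mem_range]; omega
  rw [hfilter]
  exact sum_congr rfl fun j _ => by rw [Nat.add_sub_cancel]

theorem Fin.sum_ite_val_add_one_eq {M : Type*} [AddCommMonoid M] {N : ℕ} (hN : 0 < N) (c : M) :
    ∑ m : Fin N, (if m.val + 1 = N then c else 0) = c := by
  obtain ⟨n, rfl⟩ := Nat.exists_eq_add_one_of_ne_zero hN.ne'
  rw [Fintype.sum_eq_single (Fin.last n) fun m hm => if_neg ?_]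
  · simp
  · exact fun h => hm (Fin.ext (by simpa using h))

-- Indices are 0-based: row `i` and column `m` are `i + 1` and `m + 1` in the paper.
theorem tdr_connectivity_matrix_norm_lt_one_general
    (ξ : ℝ) (hξ : 0 < ξ) (N : ℕ) (a : ℝ) (ha : |a| < 1)
    (A : Matrix (Fin N) (Fin N) ℝ)
    (hA : ∀ i m : Fin N,
      A i m = (if m.val ≤ i.val then
                  (1 - Real.exp (-ξ)) * Real.exp (-((i.val - m.val : ℕ) : ℝ) * ξ) * a
                else 0)
              + (if m.val + 1 = N then Real.exp (-((i.val + 1 : ℕ) : ℝ) * ξ) else 0)) :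
    ∀ i : Fin N, ∑ m : Fin N, |A i m| < 1 := by
  intro i
  set r := Real.exp (-ξ)
  have hr0 : 0 < r := Real.exp_pos _
  have hr1 : r < 1 := Real.exp_lt_one_iff.2 (neg_lt_zero.2 hξ)
  have hpow (k : ℕ) : Real.exp (-(k : ℝ) * ξ) = r ^ k := by
    rw [← Real.exp_nat_mul]; ring_nf
  have hentry (m : Fin N) :
      |A i m| ≤ (1 - r) * |a| * (if m.val ≤ i.val then r ^ (i.val - m.val) else 0) +
        (if m.val + 1 = N then r ^ (i.val + 1) else 0) := by
    rw [hA, hpow, hpow]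
    refine (abs_add_le _ _).trans (add_le_add ?_ ?_) <;> split_ifs
    · rw [abs_mul, abs_mul, abs_of_pos (sub_pos.2 hr1), abs_of_pos (pow_pos hr0 _)]
      exact (mul_right_comm _ _ _).le
    all_goals simp [abs_of_pos (pow_pos hr0 _)]
  have hgeom : r ^ (i.val + 1) < 1 := pow_lt_one₀ hr0.le hr1 (Nat.succ_ne_zero _)
  calc ∑ m : Fin N, |A i m|
      ≤ ∑ m : Fin N, ((1 - r) * |a| * (if m.val ≤ i.val then r ^ (i.val - m.val) else 0)
          + (if m.val + 1 = N then r ^ (i.val + 1) else 0)) := sum_le_sum fun m _ => hentry m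
    _ = |a| * ((1 - r) * ∑ j ∈ range (i.val + 1), r ^ j) + r ^ (i.val + 1) := by
      rw [sum_add_distrib, ← mul_sum, Fin.sum_ite_val_le_eq_sum_range,
        Fin.sum_ite_val_add_one_eq i.pos]
      ring
    _ = 1 - (1 - |a|) * (1 - r ^ (i.val + 1)) := by rw [mul_neg_geom_sum]; ring
    _ < 1 := sub_lt_self _ (mul_pos (sub_pos.2 ha) (sub_pos.2 hgeom))

/-- For `ξ > 0`, `N ≥ 1`, `|a| < 1`, the TDR connectivity
matrix `A` with entries (in 1-based notation)
`A_{i,m} = (1 − e^{−ξ}) e^{−(i−m)ξ} a` for `1 ≤ m ≤ i`, `A_{i,m} = 0` for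
`i < m < N`, plus the extra term `e^{−iξ}` in the last column, satisfies
`‖A‖_∞ = max_i Σ_m |A_{i,m}| < 1` (equivalently, every absolute row sum is
`< 1`).  Below indices are 0-based: row `i` and column `m` of the statement
correspond to `i.val + 1` and `m.val + 1`. -/
theorem tdr_connectivity_matrix_norm_lt_one
    (ξ : ℝ) (hξ : 0 < ξ) (N : ℕ) (hN : 1 ≤ N) (a : ℝ) (ha : |a| < 1)
    (A : Matrix (Fin N) (Fin N) ℝ)
    (hA : ∀ i m : Fin N,
      A i m = (if m.val ≤ i.val then
                  (1 - Real.exp (-ξ)) * Real.exp (-((i.val - m.val : ℕ) : ℝ) * ξ) * a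
                else 0)
              + (if m.val + 1 = N then Real.exp (-((i.val + 1 : ℕ) : ℝ) * ξ) else 0)) :
    ∀ i : Fin N, ∑ m : Fin N, |A i m| < 1 :=
  tdr_connectivity_matrix_norm_lt_one_general ξ hξ N a ha A hA
end
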